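/- Let k ≥ 3 be an integer, let G be a total k-uniform graph with no isolated vertices, and let uv be an edge of G. Then the subgraph of G induced by V(G) \ (N[u] ∪ N[v]) is nonempty, has no isolated vertices, and is total (k−2)-uniform. -/

import Mathlib

/-!
Legal sequences can be extended greedily, so in a finite graph without isolated vertices every
legal sequence is a prefix of a total dominating sequence, and total `k`-uniformity says that all
total dominating sequences have length `k`. Let `W = V \ (N[u] ∪ N[v])`. No vertex of `W` is
adjacent to `u` or `v`, while `u` and `v` dominate every vertex outside `W`; hence prefixing
`u, v` to a total dominating sequence of `G[W]` gives one of `G`, so all of them have length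
`k - 2`, and a total dominating set `A` of `G[W]` gives the total dominating set `A ∪ {u, v}` of
`G`, so `γ_t(G[W]) ≥ k - 2`. If `W` were empty, `{u, v}` would be a total dominating set of size
`2 < k`. If `x` were isolated in `G[W]`, extend `(x, v, u)` to a total dominating sequence of
`G`; dropping `x` leaves a shorter one, since every neighbour of `x` lies outside `W`.
-/

open SimpleGraph

/-- `A ⊆ V(G)` is a total dominating set of `G`: every vertex has a neighbor in `A`. -/
def TotalDomSet {V : Type*} (G : SimpleGraph V) (A : Set V) : Prop :=
  ∀ v : V, ∃ a ∈ A, G.Adj v a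

/-- `s` is a legal (open neighborhood) sequence of `G`: the vertices are distinct and every
vertex after the first has a neighbor adjacent to no vertex preceding it in the sequence. -/
def LegalSeq {V : Type*} (G : SimpleGraph V) (s : List V) : Prop :=
  s.Nodup ∧ ∀ (i : ℕ) (h : i < s.length), 0 < i →
    ∃ w : V, G.Adj (s.get ⟨i, h⟩) w ∧ ∀ u ∈ s.take i, ¬ G.Adj u w

/-- `s` is a total dominating sequence of `G`: a legal sequence whose underlying set is a
total dominating set. -/
def TotalDomSeq {V : Type*} (G : SimpleGraph V) (s : List V) : Prop :=
  LegalSeq G s ∧ TotalDomSet G {v | v ∈ s}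

/-- The total domination number `γ_t(G)`: the minimum size of a total dominating set. -/
noncomputable def totalDomNum {V : Type*} (G : SimpleGraph V) : ℕ :=
  sInf {n | ∃ A : Set V, TotalDomSet G A ∧ A.ncard = n}

/-- The Grundy total domination number `γ_gr^t(G)`: the maximum length of a total dominating
sequence. -/
noncomputable def grundyTotalDomNum {V : Type*} (G : SimpleGraph V) : ℕ :=
  sSup {n | ∃ s : List V, TotalDomSeq G s ∧ s.length = n}

/-- `G` is total `k`-uniform if `γ_t(G) = γ_gr^t(G) = k`. -/
def TotalKUniform {V : Type*} (G : SimpleGraph V) (k : ℕ) : Prop :=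
  totalDomNum G = k ∧ grundyTotalDomNum G = k

/-- `G` has no isolated vertices. -/
def NoIsolatedVerts {V : Type*} (G : SimpleGraph V) : Prop :=
  ∀ v : V, ∃ w : V, G.Adj v w

/-- The closed neighborhood `N[v] = N(v) ∪ {v}`. -/
def closedNbhd {V : Type*} (G : SimpleGraph V) (v : V) : Set V :=
  insert v (G.neighborSet v)

/-- `G` is false twin-free: no two distinct vertices have the same (open) neighborhood. -/
def FalseTwinFree {V : Type*} (G : SimpleGraph V) : Prop :=
  ∀ u v : V, u ≠ v → G.neighborSet u ≠ G.neighborSet v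

section

variable {V : Type*} {G : SimpleGraph V}

theorem legalSeq_nil : LegalSeq G [] := ⟨List.nodup_nil, fun _ h => absurd h (Nat.not_lt_zero _)⟩

theorem legalSeq_append_singleton_iff {s : List V} {a : V} :
    LegalSeq G (s ++ [a]) ↔ LegalSeq G s ∧ a ∉ s ∧
      (s ≠ [] → ∃ w, G.Adj a w ∧ ∀ x ∈ s, ¬ G.Adj x w) := by
  have hget (i : ℕ) (hi : i < s.length) (h : i < (s ++ [a]).length) :
      (s ++ [a]).get ⟨i, h⟩ = s.get ⟨i, hi⟩ := List.getElem_append_left hi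
  have htake (i : ℕ) (hi : i ≤ s.length) : (s ++ [a]).take i = s.take i :=
    List.take_append_of_le_length hi
  have hnodup : (s ++ [a]).Nodup ↔ a ∉ s ∧ s.Nodup := by
    rw [List.nodup_append_comm]; exact List.nodup_cons
  simp only [LegalSeq, hnodup, List.length_append, List.length_singleton]
  constructor
  · rintro ⟨⟨has, hnd⟩, hlegal⟩
    refine ⟨⟨hnd, fun i hi hpos => ?_⟩, has, fun hne => ?_⟩
    · simpa only [hget i hi, htake i hi.le] using hlegal i (by omega) hpos
    · have := hlegal s.length (by omega) (List.length_pos_iff.2 hne)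
      simpa [List.get_eq_getElem, List.take_left'] using this
  · rintro ⟨⟨hnd, hlegal⟩, has, hlast⟩
    refine ⟨⟨has, hnd⟩, fun i hi hpos => ?_⟩
    rcases Nat.lt_or_ge i s.length with hlt | hge
    · simpa only [hget i hlt, htake i hlt.le] using hlegal i hlt hpos
    · obtain rfl : i = s.length := by omega
      simpa [List.get_eq_getElem, List.take_left'] using hlast (List.length_pos_iff.1 hpos)

theorem legalSeq_singleton (a : V) : LegalSeq G [a] :=
  legalSeq_append_singleton_iff (s := []).2 ⟨legalSeq_nil, List.not_mem_nil, fun h => (h rfl).elim⟩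

theorem LegalSeq.of_cons {x : V} {s : List V} (h : LegalSeq G (x :: s)) : LegalSeq G s := by
  induction s using List.reverseRecOn with
  | nil => exact legalSeq_nil
  | append_singleton s a ih =>
    rw [← List.cons_append, legalSeq_append_singleton_iff] at h
    obtain ⟨hxs, has, hlast⟩ := h
    obtain ⟨w, haw, hw⟩ := hlast (List.cons_ne_nil x s)
    refine legalSeq_append_singleton_iff.2
      ⟨ih hxs, fun ha => has (List.mem_cons_of_mem x ha), fun _ => ⟨w, haw, fun y hy => ?_⟩⟩
    exact hw y (List.mem_cons_of_mem x hy)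

theorem LegalSeq.exists_append_singleton (hiso : NoIsolatedVerts G) {s : List V}
    (hs : LegalSeq G s) (hdom : ¬ TotalDomSet G {v | v ∈ s}) :
    ∃ a, LegalSeq G (s ++ [a]) := by
  obtain ⟨z, hz⟩ : ∃ z, ∀ x ∈ s, ¬ G.Adj z x := by simpa [TotalDomSet] using hdom
  obtain ⟨a, hza⟩ := hiso z
  exact ⟨a, legalSeq_append_singleton_iff.2 ⟨hs, fun ha => hz a ha hza,
    fun _ => ⟨z, hza.symm, fun x hx hxz => hz x hx hxz.symm⟩⟩⟩

theorem LegalSeq.exists_totalDomSeq_prefix [Finite V] (hiso : NoIsolatedVerts G) {s : List V}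
    (hs : LegalSeq G s) : ∃ t, TotalDomSeq G t ∧ s <+: t := by
  by_cases hdom : TotalDomSet G {v | v ∈ s}
  · exact ⟨s, ⟨hs, hdom⟩, List.prefix_refl s⟩
  obtain ⟨a, hsa⟩ := hs.exists_append_singleton hiso hdom
  obtain ⟨t, ht, hpre⟩ := hsa.exists_totalDomSeq_prefix hiso
  exact ⟨t, ht, (List.prefix_append s [a]).trans hpre⟩
termination_by Nat.card V - s.length
decreasing_by
  have := hsa.1.length_le_natCard
  simp only [List.length_append, List.length_singleton] at this ⊢
  omega

theorem ncard_setOf_mem {s : List V} (h : s.Nodup) : {v | v ∈ s}.ncard = s.length := by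
  classical
  rw [← List.coe_toFinset, Set.ncard_coe_finset, List.toFinset_card_of_nodup h]

theorem totalDomNum_le_ncard {A : Set V} (hA : TotalDomSet G A) : totalDomNum G ≤ A.ncard :=
  Nat.sInf_le ⟨A, hA, rfl⟩

theorem TotalDomSeq.totalDomNum_le_length {t : List V} (ht : TotalDomSeq G t) :
    totalDomNum G ≤ t.length :=
  ncard_setOf_mem ht.1.1 ▸ totalDomNum_le_ncard ht.2

theorem TotalDomSeq.length_le_grundyTotalDomNum [Finite V] {t : List V} (ht : TotalDomSeq G t) :
    t.length ≤ grundyTotalDomNum G :=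
  le_csSup ⟨Nat.card V, fun _ ⟨_, hs, hn⟩ => hn ▸ hs.1.1.length_le_natCard⟩ ⟨t, ht, rfl⟩

theorem TotalKUniform.length_eq [Finite V] {k : ℕ} (huni : TotalKUniform G k) {t : List V}
    (ht : TotalDomSeq G t) : t.length = k :=
  le_antisymm (huni.2 ▸ ht.length_le_grundyTotalDomNum) (huni.1 ▸ ht.totalDomNum_le_length)

theorem grundyTotalDomNum_eq_of_forall_length_eq {t : List V} {m : ℕ} (ht : TotalDomSeq G t)
    (h : ∀ s, TotalDomSeq G s → s.length = m) : grundyTotalDomNum G = m := by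
  have : {n | ∃ s : List V, TotalDomSeq G s ∧ s.length = n} = {m} :=
    Set.eq_singleton_iff_unique_mem.2 ⟨⟨t, ht, h t ht⟩, fun _ ⟨s, hs, hn⟩ => hn ▸ h s hs⟩
  rw [grundyTotalDomNum, this, csSup_singleton]

section EdgeComplement

variable {u v : V}

local notation "W" => ((closedNbhd G u ∪ closedNbhd G v)ᶜ : Set V)

theorem mem_compl_closedNbhd_union_iff {x : V} :
    x ∈ W ↔ x ≠ u ∧ ¬ G.Adj u x ∧ x ≠ v ∧ ¬ G.Adj v x := by
  simp only [closedNbhd, Set.mem_compl_iff, Set.mem_union, Set.mem_insert_iff, mem_neighborSet]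
  tauto

theorem totalDomSet_of_forall_mem_compl_closedNbhd_union (hadj : G.Adj u v) {A : Set V}
    (hu : u ∈ A) (hv : v ∈ A) (h : ∀ z ∈ W, ∃ a ∈ A, G.Adj z a) : TotalDomSet G A := by
  intro z
  by_cases hz : z ∈ W
  · exact h z hz
  obtain rfl | hzu | rfl | hzv : z = u ∨ G.Adj u z ∨ z = v ∨ G.Adj v z := by
    rw [mem_compl_closedNbhd_union_iff] at hz
    tauto
  exacts [⟨v, hv, hadj⟩, ⟨u, hu, hzu.symm⟩, ⟨u, hu, hadj.symm⟩, ⟨v, hv, hzv.symm⟩]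

theorem legalSeq_cons_cons_map_val (hadj : G.Adj u v) (hno : NoIsolatedVerts (G.induce W))
    {s : List W} (hs : LegalSeq (G.induce W) s) : LegalSeq G (u :: v :: s.map Subtype.val) := by
  induction s using List.reverseRecOn with
  | nil =>
    exact legalSeq_append_singleton_iff (s := [u]).2
      ⟨legalSeq_singleton u, by simpa using hadj.ne', fun _ => ⟨u, hadj.symm, by simp⟩⟩
  | append_singleton s a ih =>
    obtain ⟨hs', has, hlast⟩ := legalSeq_append_singleton_iff.1 hs
    obtain ⟨w, haw, hw⟩ : ∃ w : W, G.Adj a w ∧ ∀ x ∈ s, ¬ G.Adj x w := by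
      by_cases hne : s = []
      · subst hne
        obtain ⟨w, hw⟩ := hno a
        exact ⟨w, hw, by simp⟩
      · exact hlast hne
    have hwW := mem_compl_closedNbhd_union_iff.1 w.2
    have haW := mem_compl_closedNbhd_union_iff.1 a.2
    rw [List.map_append, List.map_singleton, ← List.cons_append, ← List.cons_append]
    refine legalSeq_append_singleton_iff.2 ⟨ih hs', ?_, fun _ => ⟨w, haw, ?_⟩⟩
    · simp only [List.mem_cons, List.mem_map, not_or]
      exact ⟨haW.1, haW.2.2.1, fun ⟨b, hb, hba⟩ => has (Subtype.ext hba ▸ hb)⟩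
    · simp only [List.mem_cons, List.mem_map]
      rintro x (rfl | rfl | ⟨b, hb, rfl⟩)
      exacts [hwW.2.1, hwW.2.2.2, hw b hb]

theorem totalDomSeq_cons_cons_map_val (hadj : G.Adj u v) (hno : NoIsolatedVerts (G.induce W))
    {s : List W} (hs : TotalDomSeq (G.induce W) s) :
    TotalDomSeq G (u :: v :: s.map Subtype.val) := by
  refine ⟨legalSeq_cons_cons_map_val hadj hno hs.1,
    totalDomSet_of_forall_mem_compl_closedNbhd_union hadj (by simp) (by simp) fun z hz => ?_⟩
  obtain ⟨a, ha, hza⟩ := hs.2 ⟨z, hz⟩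
  exact ⟨a, List.mem_cons_of_mem _ (List.mem_cons_of_mem _ (List.mem_map_of_mem ha)), hza⟩

theorem totalDomSet_image_val_union_pair (hadj : G.Adj u v) {A : Set W}
    (hA : TotalDomSet (G.induce W) A) : TotalDomSet G (Subtype.val '' A ∪ {u, v}) := by
  refine totalDomSet_of_forall_mem_compl_closedNbhd_union hadj (by simp) (by simp)
    fun z hz => ?_
  obtain ⟨a, ha, hza⟩ := hA ⟨z, hz⟩
  exact ⟨a, Or.inl ⟨a, ha, rfl⟩, hza⟩

theorem ncard_image_val_union_pair [Finite V] (hne : u ≠ v) (A : Set W) :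
    (Subtype.val '' A ∪ {u, v}).ncard = A.ncard + 2 := by
  have hdisj : Disjoint (Subtype.val '' A) {u, v} := by
    rw [Set.disjoint_right]
    rintro x hx ⟨a, -, rfl⟩
    have := mem_compl_closedNbhd_union_iff.1 a.2
    rcases hx with h | h
    exacts [this.1 h, this.2.2.1 h]
  rw [Set.ncard_union_eq hdisj, Set.ncard_image_of_injective _ Subtype.val_injective,
    Set.ncard_pair hne]

theorem nonempty_compl_closedNbhd_union (hadj : G.Adj u v) (h : 2 < totalDomNum G) :
    Nonempty W := by
  by_contra hW
  have hdom : TotalDomSet G {u, v} :=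
    totalDomSet_of_forall_mem_compl_closedNbhd_union hadj (by simp) (by simp)
      fun z hz => (hW ⟨⟨z, hz⟩⟩).elim
  have := totalDomNum_le_ncard hdom
  rw [Set.ncard_pair hadj.ne] at this
  omega

theorem noIsolatedVerts_induce_compl_closedNbhd_union [Finite V] (hiso : NoIsolatedVerts G)
    (hadj : G.Adj u v) {k : ℕ} (hlen : ∀ t, TotalDomSeq G t → t.length = k) :
    NoIsolatedVerts (G.induce W) := by
  by_contra hno
  simp only [NoIsolatedVerts, not_forall, not_exists] at hno
  obtain ⟨x, hx⟩ := hno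
  have hxW := mem_compl_closedNbhd_union_iff.1 x.2
  have hleg : LegalSeq G [x.1, v, u] := by
    refine legalSeq_append_singleton_iff (s := [x.1, v]).2 ⟨?_, ?_, fun _ => ⟨v, hadj, ?_⟩⟩
    · refine legalSeq_append_singleton_iff (s := [x.1]).2
        ⟨legalSeq_singleton _, ?_, fun _ => ⟨u, hadj.symm, ?_⟩⟩
      · simpa using hxW.2.2.1.symm
      · simpa using fun h => hxW.2.1 h.symm
    · simpa using ⟨hxW.1.symm, hadj.ne⟩
    · simpa using fun h => hxW.2.2.2 h.symm
  obtain ⟨t, ht, r, rfl⟩ := hleg.exists_totalDomSeq_prefix hiso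
  have hvur : TotalDomSeq G ([v, u] ++ r) := by
    refine ⟨ht.1.of_cons, totalDomSet_of_forall_mem_compl_closedNbhd_union hadj (by simp)
      (by simp) fun z hz => ?_⟩
    obtain ⟨a, ha, hza⟩ := ht.2 z
    rcases List.mem_cons.1 ha with rfl | ha
    · exact (hx ⟨z, hz⟩ hza.symm).elim
    · exact ⟨a, ha, hza⟩
  have h₁ := hlen _ ht
  have h₂ := hlen _ hvur
  simp only [List.length_append, List.length_cons, List.length_nil] at h₁ h₂
  omega

theorem totalKUniform_induce_compl_closedNbhd_union [Finite V] {k : ℕ}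
    (huni : TotalKUniform G k) (hadj : G.Adj u v) (hno : NoIsolatedVerts (G.induce W)) :
    TotalKUniform (G.induce W) (k - 2) := by
  have hlen (s : List W) (hs : TotalDomSeq (G.induce W) s) : s.length = k - 2 := by
    have := huni.length_eq (totalDomSeq_cons_cons_map_val hadj hno hs)
    simp only [List.length_cons, List.length_map] at this
    omega
  obtain ⟨t, ht, -⟩ := legalSeq_nil.exists_totalDomSeq_prefix hno
  refine ⟨IsLeast.csInf_eq ⟨⟨_, ht.2, ?_⟩, ?_⟩,
    grundyTotalDomNum_eq_of_forall_length_eq ht hlen⟩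
  · rw [ncard_setOf_mem ht.1.1, hlen t ht]
  · rintro _ ⟨A, hA, rfl⟩
    have := totalDomNum_le_ncard (totalDomSet_image_val_union_pair hadj hA)
    rw [ncard_image_val_union_pair hadj.ne, huni.1] at this
    omega

end EdgeComplement

end

/-- If `uv` is an edge of a total `k`-uniform graph `G` with no isolated vertices (`k ≥ 3`),
then the subgraph induced by `V(G) \ (N[u] ∪ N[v])` is nonempty, has no isolated vertices,
and is total `(k-2)`-uniform. -/
theorem stmt_1 {V : Type*} [Finite V] (G : SimpleGraph V) (k : ℕ) (hk : 3 ≤ k)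
    (hiso : NoIsolatedVerts G) (huni : TotalKUniform G k)
    (u v : V) (hadj : G.Adj u v) :
    Nonempty ((closedNbhd G u ∪ closedNbhd G v)ᶜ : Set V) ∧
    NoIsolatedVerts (G.induce ((closedNbhd G u ∪ closedNbhd G v)ᶜ)) ∧
    TotalKUniform (G.induce ((closedNbhd G u ∪ closedNbhd G v)ᶜ)) (k - 2) := by
  have hno := noIsolatedVerts_induce_compl_closedNbhd_union hiso hadj fun _ => huni.length_eq
  exact ⟨nonempty_compl_closedNbhd_union hadj (by rw [huni.1]; omega), hno,
    totalKUniform_induce_compl_closedNbhd_union huni hadj hno⟩
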